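/- Let x be a maximal B_K-consistent set and λ(x) = {φ : φ ∧ ∘φ ∈ x}. Then: (1) λ(x) is nonempty; (2) λ(x) is closed under conjunction: if φ,ψ ∈ λ(x) then φ∧ψ ∈ λ(x); (3) λ(x) is closed under B_K-provable implication: if φ ∈ λ(x) and B_K ⊢ φ→ψ then ψ ∈ λ(x). -/
import Mathlib


/-- Formulas of the language L∘. -/
inductive RIForm : Type where
  | var : Nat → RIForm
  | neg : RIForm → RIForm
  | and : RIForm → RIForm → RIForm
  | circ : RIForm → RIForm
deriving DecidableEq

def RIForm.imp (φ ψ : RIForm) : RIForm := .neg (.and φ (.neg ψ))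
def RIForm.or (φ ψ : RIForm) : RIForm := .neg (.and (.neg φ) (.neg ψ))
def RIForm.top : RIForm := .neg (.and (.var 0) (.neg (.var 0)))
def RIForm.bot : RIForm := .and (.var 0) (.neg (.var 0))
def RIForm.iff (φ ψ : RIForm) : RIForm := .and (φ.imp ψ) (ψ.imp φ)

/-- Reflexive-insensitive satisfaction. -/
def riSat {W : Type} (R : W → W → Prop) (V : Nat → W → Prop) : W → RIForm → Prop
  | w, .var p => V p w
  | w, .neg φ => ¬ riSat R V w φ
  | w, .and φ ψ => riSat R V w φ ∧ riSat R V w ψ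
  | w, .circ φ => ¬ riSat R V w φ ∨ ∀ x, R w x → riSat R V x φ

/-- Validity on a frame under the reflexive-insensitive semantics. -/
def riValid {W : Type} (R : W → W → Prop) (φ : RIForm) : Prop :=
  ∀ V w, riSat R V w φ

/-- Boolean evaluation treating variables and ∘-formulas as atoms. -/
def propEval (v : RIForm → Prop) : RIForm → Prop
  | .var p => v (.var p)
  | .neg φ => ¬ propEval v φ
  | .and φ ψ => propEval v φ ∧ propEval v ψ
  | .circ φ => v (.circ φ)

/-- Substitution instances of propositional tautologies. -/
def RITaut (φ : RIForm) : Prop := ∀ v, propEval v φ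

/-- Uniform substitution. -/
def RIForm.subst (σ : Nat → RIForm) : RIForm → RIForm
  | .var p => σ p
  | .neg φ => .neg (φ.subst σ)
  | .and φ ψ => .and (φ.subst σ) (ψ.subst σ)
  | .circ φ => .circ (φ.subst σ)

/-- The minimal RI-logic B_K. -/
inductive BK : RIForm → Prop
  | taut {φ} : RITaut φ → BK φ
  | b0 : BK (.circ RIForm.top)
  | b1 (φ : RIForm) : BK ((RIForm.neg (.circ φ)).imp φ)
  | b2 (φ ψ : RIForm) : BK ((RIForm.and (.circ φ) (.circ ψ)).imp (.circ (.and φ ψ)))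
  | mp {φ ψ} : BK (φ.imp ψ) → BK φ → BK ψ
  | us {φ} (σ : Nat → RIForm) : BK φ → BK (φ.subst σ)
  | bN {φ ψ} : BK (φ.imp ψ) →
      BK ((RIForm.and (.circ φ) φ).imp (RIForm.and (.circ ψ) ψ))

/-- Γ is B_K-consistent. -/
def BKConsistent (Γ : Set RIForm) : Prop :=
  ¬ ∃ l : List RIForm, (∀ φ ∈ l, φ ∈ Γ) ∧
      BK ((l.foldr RIForm.and RIForm.top).imp RIForm.bot)

/-- Γ is a maximal B_K-consistent set. -/
def BKMaximal (Γ : Set RIForm) : Prop :=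
  BKConsistent Γ ∧ ∀ φ : RIForm, φ ∈ Γ ∨ RIForm.neg φ ∈ Γ

/-- λ(x) = {φ : φ ∧ ∘φ ∈ x}. -/
def lam (Γ : Set RIForm) : Set RIForm := {φ | RIForm.and φ (.circ φ) ∈ Γ}


lemma riTaut_tac {φ : RIForm} (h : ∀ v, propEval v φ) : RITaut φ := h

lemma mem_of_bk_list (Γ : Set RIForm) (h : BKMaximal Γ) (l : List RIForm)
    (hl : ∀ φ ∈ l, φ ∈ Γ) (ψ : RIForm)
    (hd : BK ((l.foldr RIForm.and RIForm.top).imp ψ)) : ψ ∈ Γ := by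
  rcases h.2 ψ with hmem | hneg
  · exact hmem
  · exfalso
    apply h.1
    refine ⟨RIForm.neg ψ :: l, ?_, ?_⟩
    · intro φ hφ
      rcases hφ with _ | hφ
      · exact hneg
      · exact hl _ (by assumption)
    · have T : RITaut (((l.foldr RIForm.and RIForm.top).imp ψ).imp
        ((((RIForm.neg ψ :: l).foldr RIForm.and RIForm.top)).imp RIForm.bot)) := by
        intro v
        simp only [List.foldr, propEval, RIForm.imp, RIForm.bot]
        tauto
      exact BK.mp (BK.taut T) hd

lemma bk_mem (Γ : Set RIForm) (h : BKMaximal Γ) (φ : RIForm) (hφ : BK φ) : φ ∈ Γ := by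
  apply mem_of_bk_list Γ h [] (by simp) φ
  have T : RITaut (φ.imp (RIForm.top.imp φ)) := by
    intro v; simp only [propEval, RIForm.imp, RIForm.top]; tauto
  exact BK.mp (BK.taut T) hφ

lemma bk_mp_mem (Γ : Set RIForm) (h : BKMaximal Γ) (φ ψ : RIForm)
    (hφ : φ ∈ Γ) (hd : BK (φ.imp ψ)) : ψ ∈ Γ := by
  apply mem_of_bk_list Γ h [φ] (by simp [hφ]) ψ
  have T : RITaut ((φ.imp ψ).imp ((RIForm.and φ RIForm.top).imp ψ)) := by
    intro v; simp only [propEval, RIForm.imp, RIForm.top]; tauto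
  exact BK.mp (BK.taut T) hd

theorem lam_properties (Γ : Set RIForm) (h : BKMaximal Γ) :
    (lam Γ).Nonempty ∧
    (∀ φ ψ, φ ∈ lam Γ → ψ ∈ lam Γ → RIForm.and φ ψ ∈ lam Γ) ∧
    (∀ φ ψ, φ ∈ lam Γ → BK (φ.imp ψ) → ψ ∈ lam Γ) := by
  refine ⟨⟨RIForm.top, ?_⟩, ?_, ?_⟩
  · -- ⊤ ∧ ∘⊤ ∈ Γ
    apply bk_mem Γ h
    have hT : BK RIForm.top := BK.taut (by intro v; simp only [propEval, RIForm.top]; tauto)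
    have T : RITaut (RIForm.top.imp ((RIForm.circ RIForm.top).imp
        (RIForm.and RIForm.top (.circ RIForm.top)))) := by
      intro v; simp only [propEval, RIForm.imp, RIForm.top]; tauto
    exact BK.mp (BK.mp (BK.taut T) hT) BK.b0
  · intro φ ψ hφ hψ
    apply mem_of_bk_list Γ h [RIForm.and φ (.circ φ), RIForm.and ψ (.circ ψ)]
      (by simpa using ⟨hφ, hψ⟩)
    have T : RITaut (((RIForm.and (.circ φ) (.circ ψ)).imp (.circ (.and φ ψ))).imp
        (((List.foldr RIForm.and RIForm.top
            [RIForm.and φ (.circ φ), RIForm.and ψ (.circ ψ)])).imp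
          (RIForm.and (.and φ ψ) (.circ (.and φ ψ))))) := by
      intro v; simp only [List.foldr, propEval, RIForm.imp, RIForm.top]; tauto
    exact BK.mp (BK.taut T) (BK.b2 φ ψ)
  · intro φ ψ hφ hd
    have hbn := BK.bN hd
    have T : RITaut (((RIForm.and (.circ φ) φ).imp (RIForm.and (.circ ψ) ψ)).imp
        ((RIForm.and φ (.circ φ)).imp (RIForm.and ψ (.circ ψ)))) := by
      intro v; simp only [propEval, RIForm.imp]; tauto
    exact bk_mp_mem Γ h _ _ hφ (BK.mp (BK.taut T) hbn)
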